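/- arXiv:2006.00538 — 4 statements merged into one kernel-verified Lean document; each statement's English description precedes it below -/
import Mathlib

section
/- Let n ∈ ℕ, r : Fin n → ℤ, and W ∈ MvPolynomial (Fin n) ℂ have R-charge 2 under r. Let z : Fin n → ℂ satisfy z i = 0 for every i with r i ≠ 0. Then for every index j with r j ≠ 2 one has (pderiv j W)(z) = 0; i.e., at a point where all fields of nonzero R-charge vanish, all F-term equations except those of the R-charge-2 fields are automatically satisfied. -/
/-- At a point where all fields with nonzero R-charge vanish, every
F-term equation except possibly those of the R-charge-2 fields holds automatically. -/
theorem rcharge_two_Fterms_vanish_except_X (n : ℕ) (r : Fin n → ℤ)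
    (W : MvPolynomial (Fin n) ℂ)
    (hW : ∀ m ∈ W.support, ∑ i, r i * (m i : ℤ) = 2)
    (z : Fin n → ℂ)
    (hz : ∀ i, r i ≠ 0 → z i = 0) :
    ∀ j, r j ≠ 2 → MvPolynomial.eval z (MvPolynomial.pderiv j W) = 0 := by
  intro j hj
  conv_lhs => rw [show W = ∑ m ∈ W.support, MvPolynomial.monomial m (W.coeff m) from
    (MvPolynomial.support_sum_monomial_coeff W).symm]
  rw [map_sum, map_sum]
  apply Finset.sum_eq_zero
  intro m hm
  rw [MvPolynomial.pderiv_monomial, MvPolynomial.eval_monomial]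
  by_cases hmj : m j = 0
  · simp [hmj]
  · have key : ∃ i, r i ≠ 0 ∧ ((m - Finsupp.single j 1 : Fin n →₀ ℕ)) i ≠ 0 := by
      by_contra h
      push_neg at h
      have hq := hW m hm
      have hsum : ∑ i, r i * (m i : ℤ) = r j * (m j : ℤ) := by
        rw [Finset.sum_eq_single j]
        · intro i _ hij
          by_cases hri : r i = 0
          · simp [hri]
          · have := h i hri
            rw [Finsupp.tsub_apply, Finsupp.single_apply, if_neg (Ne.symm hij)] at this
            simp only [Nat.sub_zero] at this
            simp [this]
        · simp
      rw [hsum] at hq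
      by_cases hrj : r j = 0
      · simp [hrj] at hq
      · have := h j hrj
        rw [Finsupp.tsub_apply, Finsupp.single_apply, if_pos rfl] at this
        have hmj1 : m j = 1 := by omega
        rw [hmj1] at hq
        simp at hq
        exact hj hq
    obtain ⟨i, hri, hmi⟩ := key
    have hzi : z i = 0 := hz i hri
    rw [Finsupp.prod, Finset.prod_eq_zero (Finsupp.mem_support_iff.mpr hmi)]
    · ring
    · rw [hzi]; exact zero_pow hmi
end

section
/- Let n ∈ ℕ, r : Fin n → ℤ, and W ∈ MvPolynomial (Fin n) ℂ have R-charge 2 under r. Let z : Fin n → ℂ satisfy z i = 0 for every i with r i ≠ 0, and suppose additionally that (pderiv j W)(z) = 0 for every j with r j = 2. Then (pderiv i W)(z) = 0 for all i, and the scalar potential V(w) := ∑ i, ‖(pderiv i W)(w)‖² satisfies V(z) = 0 and V(z) ≤ V(w) for all w : Fin n → ℂ; i.e., z is a supersymmetric global minimum of the scalar potential. -/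
open MvPolynomial in
lemma rcharge_aux (n : ℕ) (r : Fin n → ℤ) (W : MvPolynomial (Fin n) ℂ)
    (hW : ∀ m ∈ W.support, ∑ i, r i * (m i : ℤ) = 2)
    (z : Fin n → ℂ) (hz : ∀ i, r i ≠ 0 → z i = 0)
    (i : Fin n) (hi : r i ≠ 2) : eval z (pderiv i W) = 0 := by
  conv_lhs => rw [W.as_sum]
  rw [map_sum, map_sum]
  apply Finset.sum_eq_zero
  intro m hm
  rw [pderiv_monomial, eval_monomial]
  rcases Nat.eq_zero_or_pos (m i) with h0 | hpos
  · simp [h0]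
  by_cases hcase : ∃ j, z j = 0 ∧ 1 ≤ ((m - Finsupp.single i 1 : Fin n →₀ ℕ) j)
  · obtain ⟨j, hzj, hj⟩ := hcase
    rw [Finsupp.prod, Finset.prod_eq_zero (i := j)]
    · ring
    · rw [Finsupp.mem_support_iff]; omega
    · rw [hzj, zero_pow]; omega
  · exfalso
    push_neg at hcase
    have hch := hW m hm
    have hkey : ∀ j, r j ≠ 0 → ((m - Finsupp.single i 1 : Fin n →₀ ℕ) j) = 0 := by
      intro j hj
      have := hcase j (hz j hj)
      omega
    have hsub : ∀ j, ((m - Finsupp.single i 1 : Fin n →₀ ℕ) j) = m j - Finsupp.single i 1 j := by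
      intro j; rfl
    have hji : ∀ j, j ≠ i → r j ≠ 0 → m j = 0 := by
      intro j hji hrj
      have := hkey j hrj
      rw [hsub, Finsupp.single_apply, if_neg (Ne.symm hji)] at this
      omega
    have h2 : (2 : ℤ) = r i * (m i : ℤ) := by
      rw [← hch, Finset.sum_eq_single i]
      · intro j _ hj
        by_cases hrj : r j = 0
        · rw [hrj]; ring
        · rw [hji j hj hrj]; simp
      · intro h; exact absurd (Finset.mem_univ i) h
    by_cases hri : r i = 0
    · rw [hri] at h2; simp at h2
    · have := hkey i hri
      rw [hsub, Finsupp.single_apply, if_pos rfl] at this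
      have : m i = 1 := by omega
      rw [this] at h2
      simp at h2
      omega

/-- If all fields of nonzero R-charge vanish at `z` and the F-terms of the
R-charge-2 fields vanish there, then all F-terms vanish at `z`, and `z` is a
supersymmetric global minimum of the scalar potential `V(w) = ∑ i, ‖(∂ᵢW)(w)‖²`. -/
theorem rcharge_two_susy_global_minimum (n : ℕ) (r : Fin n → ℤ)
    (W : MvPolynomial (Fin n) ℂ)
    (hW : ∀ m ∈ W.support, ∑ i, r i * (m i : ℤ) = 2)
    (z : Fin n → ℂ)
    (hz : ∀ i, r i ≠ 0 → z i = 0)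
    (hX : ∀ j, r j = 2 → MvPolynomial.eval z (MvPolynomial.pderiv j W) = 0) :
    (∀ i, MvPolynomial.eval z (MvPolynomial.pderiv i W) = 0) ∧
    (∑ i, ‖MvPolynomial.eval z (MvPolynomial.pderiv i W)‖ ^ 2 = 0) ∧
    (∀ w : Fin n → ℂ,
      ∑ i, ‖MvPolynomial.eval z (MvPolynomial.pderiv i W)‖ ^ 2 ≤
        ∑ i, ‖MvPolynomial.eval w (MvPolynomial.pderiv i W)‖ ^ 2) := by
  have hall : ∀ i, MvPolynomial.eval z (MvPolynomial.pderiv i W) = 0 := by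
    intro i
    by_cases hri : r i = 2
    · exact hX i hri
    · exact rcharge_aux n r W hW z hz i hri
  refine ⟨hall, ?_, ?_⟩
  · simp [hall]
  · intro w
    simp only [hall, norm_zero]
    have : ((0:ℝ)) ^ 2 = 0 := by norm_num
    simp only [this, Finset.sum_const, smul_zero]
    exact Finset.sum_nonneg fun i _ => pow_nonneg (norm_nonneg _) 2
end

section
/- Let n ∈ ℕ, r : Fin n → ℤ, and W ∈ MvPolynomial (Fin n) ℂ have R-charge 2 under r. Define the scalar potential V(z) := ∑ i, ‖(pderiv i W)(z)‖². Then V is invariant under the unitary R-symmetry action: for every λ ∈ ℂ with ‖λ‖ = 1 and every z : Fin n → ℂ, V(fun i => λ^(r i) * z i) = V(z). -/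
/-! If `W` is weighted homogeneous of degree `2` for the weights `r`, then `∂ᵢW` is weighted
homogeneous of degree `2 - r i`, so `(∂ᵢW)(λ^r • z) = λ^(2 - r i) (∂ᵢW)(z)`; for `‖λ‖ = 1` this
phase drops out of each term of the potential. -/

open MvPolynomial Finsupp

theorem zpow_sum₀ {G₀ ι : Type*} [CommGroupWithZero G₀] {a : G₀} (ha : a ≠ 0) (s : Finset ι)
    (f : ι → ℤ) : a ^ (∑ i ∈ s, f i) = ∏ i ∈ s, a ^ f i := by
  classical
  induction s using Finset.induction_on with
  | empty => simp
  | insert i s hi ih => rw [Finset.sum_insert hi, Finset.prod_insert hi, zpow_add₀ ha, ih]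

namespace MvPolynomial

variable {σ : Type*}

theorem isWeightedHomogeneous_of_forall_mem_support {R : Type*} [Fintype σ] [CommSemiring R]
    {w : σ → ℤ} {φ : MvPolynomial σ R} {k : ℤ} (h : ∀ d ∈ φ.support, ∑ i, w i * (d i : ℤ) = k) :
    IsWeightedHomogeneous w φ k := fun d hd => by
  simpa [weight_eq_sum, mul_comm] using h d (mem_support_iff.mpr hd)

theorem eval_monomial_zpow_mul {K : Type*} [Field K] (w : σ → ℤ) {l : K} (hl : l ≠ 0)
    (z : σ → K) (d : σ →₀ ℕ) (a : K) :
    eval (fun j => l ^ w j * z j) (monomial d a) = l ^ weight w d * eval z (monomial d a) := by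
  have hpow : (d.prod fun j e => (l ^ w j) ^ e) = l ^ weight w d := by
    rw [weight_apply, Finsupp.sum, zpow_sum₀ hl, Finsupp.prod]
    refine Finset.prod_congr rfl fun j _ => ?_
    rw [← zpow_natCast, ← zpow_mul, nsmul_eq_mul, mul_comm]
  simp only [eval_monomial, mul_pow, Finsupp.prod_mul, hpow]
  ring

theorem IsWeightedHomogeneous.eval_zpow_mul {K : Type*} [Field K] {w : σ → ℤ}
    {φ : MvPolynomial σ K} {k : ℤ} (hφ : IsWeightedHomogeneous w φ k) {l : K} (hl : l ≠ 0)
    (z : σ → K) : eval (fun j => l ^ w j * z j) φ = l ^ k * eval z φ := by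
  conv_lhs => rw [φ.as_sum]
  conv_rhs => rw [φ.as_sum]
  simp only [map_sum, Finset.mul_sum]
  refine Finset.sum_congr rfl fun d hd => ?_
  rw [eval_monomial_zpow_mul w hl, hφ (mem_support_iff.mp hd)]

end MvPolynomial

/-- The scalar potential `V(z) = ∑ i, ‖(∂ᵢW)(z)‖²` of an R-charge-2
polynomial is invariant under the unitary R-symmetry action `z ↦ (fun i => λ^(r i) * z i)`
for `‖λ‖ = 1`. -/
theorem rcharge_two_potential_invariant (n : ℕ) (r : Fin n → ℤ)
    (W : MvPolynomial (Fin n) ℂ)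
    (hW : ∀ m ∈ W.support, ∑ i, r i * (m i : ℤ) = 2)
    (l : ℂ) (hl : ‖l‖ = 1) (z : Fin n → ℂ) :
    ∑ i, ‖MvPolynomial.eval (fun j => l ^ (r j) * z j) (MvPolynomial.pderiv i W)‖ ^ 2 =
      ∑ i, ‖MvPolynomial.eval z (MvPolynomial.pderiv i W)‖ ^ 2 := by
  have hl0 : l ≠ 0 := norm_ne_zero_iff.mp (hl ▸ one_ne_zero)
  have hW' : IsWeightedHomogeneous r W 2 := isWeightedHomogeneous_of_forall_mem_support hW
  refine Finset.sum_congr rfl fun i _ => ?_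
  rw [(hW'.pderiv (sub_add_cancel 2 (r i))).eval_zpow_mul hl0, norm_mul, norm_zpow, hl, one_zpow,
    one_mul]
end

section
/- Let n ∈ ℕ, r : Fin n → ℤ with r i ∈ {0, 2} for every i, and let W ∈ MvPolynomial (Fin n) ℂ have R-charge 2 under r. Then every monomial m in the support of W contains exactly one variable of charge 2, with exponent exactly 1: there exist polynomials f i ∈ MvPolynomial (Fin n) ℂ, each involving only variables j with r j = 0, such that W = ∑_{i : r i = 2} (MvPolynomial.X i) * f i. -/
/-!
With weights `w i = r i / 2 ∈ {0, 1}`, the R-charge condition says that `W` is weighted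
homogeneous of degree `1`. The weighted Euler identity then gives `W = ∑ᵢ w i • Xᵢ ∂ᵢW`, and
each `∂ᵢW` with `w i = 1` has weighted degree `0`, so it involves no variable of positive weight.
-/

open Finset

namespace MvPolynomial

variable {σ R : Type*} [CommSemiring R] {w : σ → ℕ} {φ : MvPolynomial σ R}

theorem IsWeightedHomogeneous.eq_zero_of_mem_support_of_weight_ne_zero
    (h : φ.IsWeightedHomogeneous w 0) {m : σ →₀ ℕ} (hm : m ∈ φ.support) {j : σ}
    (hj : w j ≠ 0) : m j = 0 :=
  Nat.eq_zero_of_le_zero <| (Finsupp.le_weight w hj m).trans_eq (h (mem_support_iff.mp hm))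

theorem IsWeightedHomogeneous.smul_pderiv_of_degree_one (h : φ.IsWeightedHomogeneous w 1)
    (i : σ) : (w i • pderiv i φ).IsWeightedHomogeneous w 0 := by
  intro m hm
  rw [coeff_smul, coeff_pderiv] at hm
  have hwi : w i ≠ 0 := left_ne_zero_of_smul hm
  have hweight := h (left_ne_zero_of_mul (right_ne_zero_of_smul hm))
  rw [map_add, Finsupp.weight_single, one_smul] at hweight
  omega

theorem IsWeightedHomogeneous.sum_X_mul_smul_pderiv [Fintype σ]
    (h : φ.IsWeightedHomogeneous w 1) : ∑ i, X i * (w i • pderiv i φ) = φ := by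
  simpa only [mul_smul_comm, one_smul] using h.sum_weight_X_mul_pderiv

end MvPolynomial

open MvPolynomial in
/-- If all R-charges are 0 or 2 and `W` has R-charge 2, then
`W = ∑_{i : r i = 2} Xᵢ * fᵢ(Y)` where each `fᵢ` involves only R-charge-0 variables. -/
theorem rcharge_two_X_linear_decomposition (n : ℕ) (r : Fin n → ℤ)
    (hr : ∀ i, r i = 0 ∨ r i = 2)
    (W : MvPolynomial (Fin n) ℂ)
    (hW : ∀ m ∈ W.support, ∑ i, r i * (m i : ℤ) = 2) :
    ∃ f : Fin n → MvPolynomial (Fin n) ℂ,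
      (∀ i, ∀ m ∈ (f i).support, ∀ j, r j ≠ 0 → m j = 0) ∧
      W = ∑ i ∈ Finset.univ.filter (fun i => r i = 2),
            MvPolynomial.X i * f i := by
  set w : Fin n → ℕ := fun i => if r i = 2 then 1 else 0
  have hrw : ∀ i, r i = 2 * w i := fun i => by rcases hr i with h | h <;> simp [w, h]
  have hW₁ : W.IsWeightedHomogeneous w 1 := by
    intro m hm
    have hcharge := hW m (mem_support_iff.mpr hm)
    simp only [hrw, mul_assoc, ← mul_sum] at hcharge
    have hsum : ∑ i, (w i : ℤ) * m i = 1 := by linarith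
    rw [Finsupp.weight_eq_sum]
    simp only [smul_eq_mul, mul_comm (m _)]
    exact_mod_cast hsum
  refine ⟨fun i => w i • pderiv i W, fun i m hm j hj => ?_, ?_⟩
  · refine (hW₁.smul_pderiv_of_degree_one i).eq_zero_of_mem_support_of_weight_ne_zero hm ?_
    simpa [hrw] using hj
  · rw [sum_filter_of_ne, hW₁.sum_X_mul_smul_pderiv]
    intro i _ hi
    by_contra h
    simp [w, h] at hi
end
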